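/- (Theorem 2(i), finite-sum R-ProxSPB.) Let (Ω, 𝓕, P) be a probability space, T ≥ 1 and q ≥ 1 integers, X₀ ∈ St(d,r) deterministic, γ = 2/5, and let (X_t)_{t=0}^{T}, (v_t)_{t=0}^{T−1}, (ζ_t)_{t=0}^{T−1} be random matrices in ℝ^{d×r} such that, almost surely for every 0 ≤ t ≤ T−1: X_t ∈ St(d,r); ζ_t ∈ T_{X_t} is the minimizer over T_{X_t} of ζ ↦ ⟨v_t, ζ⟩ + (1/(2γ))‖ζ‖² + h(X_t + ζ); X_{t+1} = Retr_{X_t}(ηζ_t); f(X_{t+1}) ≤ f(X_t) + η⟨∇f(X_t), ζ_t⟩ + (L_R η²/2)‖ζ_t‖²; ‖X_{t+1} − (X_t + ηζ_t)‖ ≤ M₂ η² ‖ζ_t‖²; and ‖Retr_{X_t}(χ) − X_t‖ ≤ M₁‖χ‖ for all χ ∈ T_{X_t}, where Retr is the polar retraction. Assume L_R, L_h, M₁, M₂ > 0, Λ ≥ 0, η ∈ (0,1] satisfies Λη²/2 + L̃η − 2 ≤ −1 with L̃ = L_R/2 + L_h M₂, h : ℝ^{d×r} → ℝ is convex and L_h-Lipschitz,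 f : ℝ^{d×r} → ℝ is differentiable, F = f + h satisfies F(X) ≥ F* for all X ∈ St(d,r), Δ₀ = F(X₀) − F*, all the indicated expectations are finite, and for every t, E[‖v_t − ∇f(X_t)‖²] ≤ (Λη²/q) ∑_{i=q⌊t/q⌋}^{t−1} E[‖ζ_i‖²]. For each t let ξ_t be the minimizer over T_{X_t} of ξ ↦ ⟨∇f(X_t), ξ⟩ + (1/(2γ))‖ξ‖² + h(X_t + ξ), and set G_t = (X_t − Retr_{X_t}(γξ_t))/γ. Then (1/T)∑_{t=0}^{T−1} E[‖G_t‖²] ≤ 14M₁²Δ₀/(ηT) + 8M₁²γΛη·Δ₀/T. -/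

import Mathlib

open Matrix MeasureTheory Finset

noncomputable section

/-- The space of real `d × r` matrices. -/
abbrev Mat (d r : ℕ) := Matrix (Fin d) (Fin r) ℝ

/-- The Frobenius inner product `⟨A, B⟩ = tr(Aᵀ B)`. -/
def finner {d r : ℕ} (A B : Mat d r) : ℝ := (Aᵀ * B).trace

/-- The Stiefel manifold `St(d,r) = {X : Xᵀ X = I}`. -/
def Stiefel {d r : ℕ} (X : Mat d r) : Prop := Xᵀ * X = 1

/-- The tangent space to the Stiefel manifold at `X`:
`T_X = {ζ : ζᵀ X + Xᵀ ζ = 0}`. -/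
def TangentAt {d r : ℕ} (X : Mat d r) : Set (Mat d r) :=
  {ζ | ζᵀ * X + Xᵀ * ζ = 0}

lemma posSemidef_one_add_transpose_mul_self {d r : ℕ} (ξ : Mat d r) :
    (1 + ξᵀ * ξ).PosSemidef := by
  have h := Matrix.posSemidef_conjTranspose_mul_self ξ
  rw [Matrix.conjTranspose_eq_transpose_of_trivial] at h
  exact Matrix.PosSemidef.one.add h

namespace Matrix.PosSemidef

/-- The positive semidefinite square root of a positive semidefinite matrix
(the definition of `Matrix.PosSemidef.sqrt` from the older Mathlib, since removed). -/
def sqrt {n : Type*} [Fintype n] [DecidableEq n] {A : Matrix n n ℝ}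
    (hA : A.PosSemidef) : Matrix n n ℝ :=
  (hA.1.eigenvectorUnitary : Matrix n n ℝ) *
    diagonal ((RCLike.ofReal : ℝ → ℝ) ∘ (fun x => Real.sqrt x) ∘ hA.1.eigenvalues) *
    (star hA.1.eigenvectorUnitary : Matrix n n ℝ)

lemma sqrt_mul_self' {n : Type*} [Fintype n] [DecidableEq n] {A : Matrix n n ℝ}
    (hA : A.PosSemidef) : hA.sqrt * hA.sqrt = A := by
  have hU : (star hA.1.eigenvectorUnitary : Matrix n n ℝ) * hA.1.eigenvectorUnitary = 1 :=
    Unitary.star_mul_self_of_mem hA.1.eigenvectorUnitary.2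
  conv_rhs => rw [hA.1.spectral_theorem]
  rw [Unitary.conjStarAlgAut_apply]
  unfold sqrt
  simp only [Matrix.mul_assoc]
  rw [← Matrix.mul_assoc (star hA.1.eigenvectorUnitary : Matrix n n ℝ), hU, Matrix.one_mul,
    ← Matrix.mul_assoc (diagonal _), diagonal_mul_diagonal]
  congr 3
  funext i
  simp [Real.mul_self_sqrt (hA.eigenvalues_nonneg i)]

lemma sqrt_transpose' {n : Type*} [Fintype n] [DecidableEq n] {A : Matrix n n ℝ}
    (hA : A.PosSemidef) : (hA.sqrt)ᵀ = hA.sqrt := by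
  unfold sqrt
  rw [Matrix.transpose_mul, Matrix.transpose_mul, diagonal_transpose,
    star_eq_conjTranspose, conjTranspose_eq_transpose_of_trivial, transpose_transpose,
    Matrix.mul_assoc]

end Matrix.PosSemidef

/-- The polar retraction `Retr_X(ξ) = (X + ξ)(I + ξᵀ ξ)^{-1/2}`, where the square root
is the unique positive-semidefinite (here positive-definite) square root. -/
def polarRetr {d r : ℕ} (X ξ : Mat d r) : Mat d r :=
  (X + ξ) * ((posSemidef_one_add_transpose_mul_self ξ).sqrt)⁻¹

/- Equip matrices with the Frobenius norm (the norm induced by `finner`). -/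
attribute [local instance] Matrix.frobeniusNormedAddCommGroup Matrix.frobeniusNormedSpace

/-- The subproblem objective `φ(ζ) = ⟨v, ζ⟩ + (1/(2γ))‖ζ‖² + h(X + ζ)`. -/
def phi {d r : ℕ} (γ : ℝ) (h : Mat d r → ℝ) (X v ζ : Mat d r) : ℝ :=
  finner v ζ + (1 / (2 * γ)) * ‖ζ‖ ^ 2 + h (X + ζ)

/-- `ζ` is a minimizer of `phi γ h X v` over the tangent space at `X`. -/
def IsSubMin {d r : ℕ} (γ : ℝ) (h : Mat d r → ℝ) (X v ζ : Mat d r) : Prop :=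
  ζ ∈ TangentAt X ∧ ∀ ζ' ∈ TangentAt X, phi γ h X v ζ ≤ phi γ h X v ζ'


section Aux

variable {d r : ℕ}

lemma finner_eq_sum (A B : Mat d r) : finner A B = ∑ j, ∑ i, A i j * B i j := by
  simp [finner, Matrix.trace, Matrix.diag, Matrix.mul_apply, Matrix.transpose_apply]

lemma finner_comm (A B : Mat d r) : finner A B = finner B A := by
  simp only [finner_eq_sum, mul_comm]

lemma finner_add_left (A B C : Mat d r) : finner (A + B) C = finner A C + finner B C := by
  simp [finner_eq_sum, Matrix.add_apply, add_mul, Finset.sum_add_distrib]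

lemma finner_add_right (A B C : Mat d r) : finner A (B + C) = finner A B + finner A C := by
  simp [finner_eq_sum, Matrix.add_apply, mul_add, Finset.sum_add_distrib]

lemma finner_sub_left (A B C : Mat d r) : finner (A - B) C = finner A C - finner B C := by
  simp [finner_eq_sum, Matrix.sub_apply, sub_mul, Finset.sum_sub_distrib]

lemma finner_smul_right (c : ℝ) (A B : Mat d r) : finner A (c • B) = c * finner A B := by
  simp [finner_eq_sum, Matrix.smul_apply, smul_eq_mul, Finset.mul_sum, mul_left_comm]

lemma finner_smul_left (c : ℝ) (A B : Mat d r) : finner (c • A) B = c * finner A B := by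
  rw [finner_comm, finner_smul_right, finner_comm]

lemma finner_zero_right (A : Mat d r) : finner A 0 = 0 := by
  simp [finner_eq_sum]

lemma finner_self (A : Mat d r) : finner A A = ‖A‖ ^ 2 := by
  have hS : (0:ℝ) ≤ ∑ i, ∑ j, A i j * A i j :=
    Finset.sum_nonneg fun i _ => Finset.sum_nonneg fun j _ => mul_self_nonneg _
  have hnorm : ‖A‖ = (∑ i, ∑ j, A i j * A i j) ^ (1/2 : ℝ) := by
    rw [Matrix.frobenius_norm_def]
    congr 1
    refine Finset.sum_congr rfl fun i _ => Finset.sum_congr rfl fun j _ => ?_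
    rw [Real.rpow_two, Real.norm_eq_abs, sq_abs, sq]
  have h2 : ‖A‖ ^ 2 = ∑ i, ∑ j, A i j * A i j := by
    rw [hnorm, ← Real.rpow_natCast ((∑ i, ∑ j, A i j * A i j) ^ (1/2 : ℝ)) 2,
      ← Real.rpow_mul hS]
    norm_num
  rw [h2, finner_eq_sum, Finset.sum_comm]

lemma finner_norm_add_sq (A B : Mat d r) :
    ‖A + B‖ ^ 2 = ‖A‖ ^ 2 + 2 * finner A B + ‖B‖ ^ 2 := by
  rw [← finner_self, ← finner_self, ← finner_self, finner_add_left, finner_add_right,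
    finner_add_right, finner_comm B A]
  ring

lemma finner_le_norm (A B : Mat d r) : finner A B ≤ ‖A‖ * ‖B‖ := by
  have hkey : 0 ≤ ‖‖B‖ • A - ‖A‖ • B‖ ^ 2 := sq_nonneg _
  have hexp : ‖‖B‖ • A - ‖A‖ • B‖ ^ 2
      = ‖B‖^2*‖A‖^2 - 2*(‖A‖*‖B‖)*finner A B + ‖A‖^2*‖B‖^2 := by
    rw [sub_eq_add_neg, show -(‖A‖ • B) = (-‖A‖) • B by rw [neg_smul], finner_norm_add_sq,
      finner_smul_left, finner_smul_right, norm_smul, norm_smul]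
    simp [Real.norm_eq_abs, abs_of_nonneg (norm_nonneg A), abs_of_nonneg (norm_nonneg B),
      mul_pow, sq_abs]
    ring
  rcases eq_or_lt_of_le (mul_nonneg (norm_nonneg A) (norm_nonneg B)) with h0 | h0
  · rcases mul_eq_zero.mp h0.symm with hA | hB
    · rw [norm_eq_zero.mp hA]
      simp [finner_eq_sum, mul_nonneg, norm_nonneg]
    · rw [norm_eq_zero.mp hB]
      simp [finner_zero_right, mul_nonneg, norm_nonneg]
  · nlinarith [hkey, hexp]

lemma tangent_zero (X : Mat d r) : (0 : Mat d r) ∈ TangentAt X := by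
  simp [TangentAt]

lemma tangent_smul {X ζ : Mat d r} (c : ℝ) (hζ : ζ ∈ TangentAt X) :
    c • ζ ∈ TangentAt X := by
  have hζ' : ζᵀ * X + Xᵀ * ζ = 0 := hζ
  show (c • ζ)ᵀ * X + Xᵀ * (c • ζ) = 0
  rw [Matrix.transpose_smul, Matrix.smul_mul, Matrix.mul_smul, ← smul_add, hζ', smul_zero]

lemma tangent_add {X ζ ζ' : Mat d r} (h1 : ζ ∈ TangentAt X) (h2 : ζ' ∈ TangentAt X) :
    ζ + ζ' ∈ TangentAt X := by
  have h1' : ζᵀ * X + Xᵀ * ζ = 0 := h1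
  have h2' : ζ'ᵀ * X + Xᵀ * ζ' = 0 := h2
  show (ζ + ζ')ᵀ * X + Xᵀ * (ζ + ζ') = 0
  rw [Matrix.transpose_add, Matrix.add_mul, Matrix.mul_add]
  calc ζᵀ * X + ζ'ᵀ * X + (Xᵀ * ζ + Xᵀ * ζ')
      = (ζᵀ * X + Xᵀ * ζ) + (ζ'ᵀ * X + Xᵀ * ζ') := by abel
    _ = 0 := by rw [h1', h2', add_zero]

lemma tangent_sub {X ζ ζ' : Mat d r} (h1 : ζ ∈ TangentAt X) (h2 : ζ' ∈ TangentAt X) :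
    ζ - ζ' ∈ TangentAt X := by
  rw [sub_eq_add_neg, show -ζ' = (-1 : ℝ) • ζ' by simp]
  exact tangent_add h1 (tangent_smul _ h2)

lemma nonneg_of_forall_lam {C K : ℝ} (hK0 : 0 ≤ K)
    (hstep : ∀ lam : ℝ, 0 < lam → lam < 1 → 0 ≤ C + lam * K) : 0 ≤ C := by
  by_contra hneg
  push_neg at hneg
  set lam0 := min (1/2 : ℝ) (-C / (2 * (K + 1))) with hlam0
  have hl0 : 0 < lam0 := by
    rw [hlam0]
    apply lt_min (by norm_num)
    apply div_pos (by linarith) (by linarith)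
  have hl1 : lam0 < 1 := lt_of_le_of_lt (min_le_left _ _) (by norm_num)
  have hfact := hstep lam0 hl0 hl1
  have hb1 : lam0 * K ≤ (-C / (2 * (K + 1))) * K :=
    mul_le_mul_of_nonneg_right (min_le_right _ _) hK0
  have hb2 : (-C / (2 * (K + 1))) * K ≤ -C / 2 := by
    rw [div_mul_eq_mul_div, div_le_div_iff₀ (by linarith) (by norm_num)]
    nlinarith
  linarith

/-- Strong-convexity minimizer inequality for the subproblem. -/
lemma submin_key {γ : ℝ} (hγ : 0 < γ) {h : Mat d r → ℝ} (hconv : ConvexOn ℝ Set.univ h)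
    {X v ζ : Mat d r} (hmin : IsSubMin γ h X v ζ) {ζ' : Mat d r} (hζ' : ζ' ∈ TangentAt X) :
    phi γ h X v ζ + (1 / (2 * γ)) * ‖ζ' - ζ‖ ^ 2 ≤ phi γ h X v ζ' := by
  have hC : 0 ≤ finner v (ζ' - ζ) + (1/γ) * finner ζ (ζ' - ζ) + (h (X + ζ') - h (X + ζ)) := by
    refine nonneg_of_forall_lam (K := (1/(2*γ)) * ‖ζ' - ζ‖ ^ 2) (by positivity) ?_
    intro lam hl0 hl1
    have hmem : ζ + lam • (ζ' - ζ) ∈ TangentAt X :=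
      tangent_add hmin.1 (tangent_smul lam (tangent_sub hζ' hmin.1))
    have hle := hmin.2 _ hmem
    simp only [phi] at hle
    have e1 : finner v (ζ + lam • (ζ' - ζ)) = finner v ζ + lam * finner v (ζ' - ζ) := by
      rw [finner_add_right, finner_smul_right]
    have e2 : ‖ζ + lam • (ζ' - ζ)‖ ^ 2
        = ‖ζ‖ ^ 2 + 2 * (lam * finner ζ (ζ' - ζ)) + lam ^ 2 * ‖ζ' - ζ‖ ^ 2 := by
      rw [finner_norm_add_sq, finner_smul_right, norm_smul, Real.norm_eq_abs, mul_pow, sq_abs]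
    have e3 : h (X + (ζ + lam • (ζ' - ζ))) ≤ (1 - lam) * h (X + ζ) + lam * h (X + ζ') := by
      have heq : X + (ζ + lam • (ζ' - ζ)) = (1 - lam) • (X + ζ) + lam • (X + ζ') := by
        module
      rw [heq]
      exact hconv.2 (Set.mem_univ _) (Set.mem_univ _) (by linarith) (le_of_lt hl0) (by ring)
    rw [e1, e2] at hle
    have h6 : 0 ≤ lam * ((finner v (ζ' - ζ) + (1/γ) * finner ζ (ζ' - ζ)
        + (h (X + ζ') - h (X + ζ))) + lam * ((1/(2*γ)) * ‖ζ' - ζ‖ ^ 2)) := by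
      have key : lam * ((finner v (ζ' - ζ) + (1/γ) * finner ζ (ζ' - ζ)
            + (h (X + ζ') - h (X + ζ))) + lam * ((1/(2*γ)) * ‖ζ' - ζ‖ ^ 2))
          = lam * finner v (ζ' - ζ)
            + (1/(2*γ)) * (2 * (lam * finner ζ (ζ' - ζ)) + lam ^ 2 * ‖ζ' - ζ‖ ^ 2)
            + ((1 - lam) * h (X + ζ) + lam * h (X + ζ') - h (X + ζ)) := by
        field_simp
        ring
      rw [key]
      linarith [hle, e3]
    nlinarith [h6, hl0]
  have hz : ζ' = ζ + (ζ' - ζ) := by abel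
  have e1 : finner v ζ' = finner v ζ + finner v (ζ' - ζ) := by
    conv_lhs => rw [hz]
    rw [finner_add_right]
  have e2 : ‖ζ'‖ ^ 2 = ‖ζ‖ ^ 2 + 2 * finner ζ (ζ' - ζ) + ‖ζ' - ζ‖ ^ 2 := by
    conv_lhs => rw [hz]
    rw [finner_norm_add_sq]
  simp only [phi]
  rw [e1, e2]
  have hγ2 : (1/(2*γ)) * (2 * finner ζ (ζ' - ζ)) = (1/γ) * finner ζ (ζ' - ζ) := by
    field_simp
  nlinarith [hC]

lemma submin_at_zero {γ : ℝ} (hγ : 0 < γ) {h : Mat d r → ℝ} (hconv : ConvexOn ℝ Set.univ h)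
    {X v ζ : Mat d r} (hmin : IsSubMin γ h X v ζ) :
    finner v ζ + (1/γ) * ‖ζ‖ ^ 2 + h (X + ζ) ≤ h X := by
  have hkey := submin_key hγ hconv hmin (tangent_zero X)
  simp only [phi] at hkey
  rw [finner_zero_right, zero_sub, norm_neg, norm_zero, add_zero] at hkey
  have : (1/(2*γ)) * ‖ζ‖^2 + (1/(2*γ)) * ‖ζ‖^2 = (1/γ) * ‖ζ‖^2 := by field_simp; ring
  nlinarith [hkey]

lemma submin_dist {γ : ℝ} (hγ : 0 < γ) {h : Mat d r → ℝ} (hconv : ConvexOn ℝ Set.univ h)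
    {X v g ζ ξ : Mat d r} (h1 : IsSubMin γ h X v ζ) (h2 : IsSubMin γ h X g ξ) :
    ‖ξ - ζ‖ ≤ γ * ‖g - v‖ := by
  have k1 := submin_key hγ hconv h1 h2.1
  have k2 := submin_key hγ hconv h2 h1.1
  simp only [phi] at k1 k2
  rw [norm_sub_rev ζ ξ] at k2
  have hsum : (1/γ) * ‖ξ - ζ‖ ^ 2 ≤ finner (v - g) (ξ - ζ) := by
    have e : finner (v - g) (ξ - ζ)
        = (finner v ξ + finner g ζ) - (finner v ζ + finner g ξ) := by
      rw [finner_sub_left, finner_comm v (ξ - ζ), finner_sub_left, finner_comm g (ξ - ζ),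
        finner_sub_left, finner_comm ξ v, finner_comm ζ v, finner_comm ξ g, finner_comm ζ g]
      ring
    have hg2 : (1/(2*γ)) * ‖ξ - ζ‖^2 + (1/(2*γ)) * ‖ξ - ζ‖^2 = (1/γ) * ‖ξ - ζ‖^2 := by
      field_simp; ring
    linarith [k1, k2]
  have hCS : finner (v - g) (ξ - ζ) ≤ ‖v - g‖ * ‖ξ - ζ‖ := finner_le_norm _ _
  rw [norm_sub_rev v g] at hCS
  rcases eq_or_lt_of_le (norm_nonneg (ξ - ζ)) with h0 | h0
  · rw [← h0]
    positivity
  · have hchain := hsum.trans hCS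
    have hsq : ‖ξ - ζ‖ * ‖ξ - ζ‖ ≤ (γ * ‖g - v‖) * ‖ξ - ζ‖ := by
      have := mul_le_mul_of_nonneg_left hchain (le_of_lt hγ)
      have hne : γ ≠ 0 := ne_of_gt hγ
      calc ‖ξ - ζ‖ * ‖ξ - ζ‖ = γ * ((1/γ) * ‖ξ - ζ‖ ^ 2) := by field_simp
        _ ≤ γ * (‖g - v‖ * ‖ξ - ζ‖) := this
        _ = (γ * ‖g - v‖) * ‖ξ - ζ‖ := by ring
    exact le_of_mul_le_mul_right hsq h0

lemma stiefel_polarRetr {X ξ : Mat d r} (hX : Stiefel X) (hξ : ξ ∈ TangentAt X) :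
    Stiefel (polarRetr X ξ) := by
  classical
  set S := (posSemidef_one_add_transpose_mul_self ξ).sqrt with hSdef
  have hSS : S * S = 1 + ξᵀ * ξ := (posSemidef_one_add_transpose_mul_self ξ).sqrt_mul_self'
  have hSym : Sᵀ = S := by
    exact (posSemidef_one_add_transpose_mul_self ξ).sqrt_transpose'
  have hPSD : (ξᵀ * ξ).PosSemidef := by
    have h := Matrix.posSemidef_conjTranspose_mul_self ξ
    rwa [Matrix.conjTranspose_eq_transpose_of_trivial] at h
  have hPD : (1 + ξᵀ * ξ).PosDef := Matrix.PosDef.add_posSemidef Matrix.PosDef.one hPSD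
  have hdet : IsUnit S.det := by
    have h2 : S.det * S.det = (1 + ξᵀ * ξ).det := by rw [← Matrix.det_mul, hSS]
    have h3 := hPD.det_pos
    refine isUnit_iff_ne_zero.mpr fun h0 => ?_
    rw [h0, zero_mul] at h2
    linarith [h2 ▸ h3]
  have hmid : (X + ξ)ᵀ * (X + ξ) = S * S := by
    have hX' : Xᵀ * X = 1 := hX
    have hξ' : ξᵀ * X + Xᵀ * ξ = 0 := hξ
    rw [hSS, Matrix.transpose_add, Matrix.add_mul, Matrix.mul_add, Matrix.mul_add, hX']
    have hξ2 : Xᵀ * ξ + ξᵀ * X = 0 := by rw [add_comm]; exact hξ'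
    have hxz : Xᵀ * ξ = -(ξᵀ * X) := eq_neg_of_add_eq_zero_left hξ2
    rw [hxz]
    abel
  show (polarRetr X ξ)ᵀ * polarRetr X ξ = 1
  unfold polarRetr
  rw [Matrix.transpose_mul, Matrix.transpose_nonsing_inv, ← hSdef, hSym]
  calc S⁻¹ * (X + ξ)ᵀ * ((X + ξ) * S⁻¹)
      = S⁻¹ * ((X + ξ)ᵀ * (X + ξ)) * S⁻¹ := by
        rw [Matrix.mul_assoc, Matrix.mul_assoc, Matrix.mul_assoc]
    _ = (S⁻¹ * S) * (S * S⁻¹) := by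
        rw [hmid]
        simp only [Matrix.mul_assoc]
    _ = 1 := by
        rw [Matrix.nonsing_inv_mul _ hdet, Matrix.mul_nonsing_inv _ hdet, one_mul]

lemma sum_epoch_le (q T : ℕ) (hq : 1 ≤ q) (z : ℕ → ℝ) (hz : ∀ i, 0 ≤ z i) :
    ∑ t ∈ Finset.range T, ∑ i ∈ Finset.Ico (q * (t / q)) t, z i
      ≤ (q : ℝ) * ∑ i ∈ Finset.range T, z i := by
  classical
  have hsub : ∀ t ∈ Finset.range T, ∑ i ∈ Finset.Ico (q * (t / q)) t, z i
      = ∑ i ∈ Finset.range T, if i ∈ Finset.Ico (q * (t / q)) t then z i else 0 := by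
    intro t ht
    rw [Finset.sum_ite_mem, Finset.inter_eq_right.mpr]
    intro i hi
    simp only [Finset.mem_Ico] at hi
    exact Finset.mem_range.mpr (lt_trans hi.2 (Finset.mem_range.mp ht))
  rw [Finset.sum_congr rfl hsub, Finset.sum_comm]
  have hbound : ∀ i ∈ Finset.range T,
      (∑ t ∈ Finset.range T, if i ∈ Finset.Ico (q * (t / q)) t then z i else 0)
        ≤ (q : ℝ) * z i := by
    intro i _
    rw [← Finset.sum_filter]
    rw [Finset.sum_const, nsmul_eq_mul]
    have hcard : ((Finset.range T).filter
        (fun t => i ∈ Finset.Ico (q * (t / q)) t)).card ≤ q := by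
      have hsubset : (Finset.range T).filter (fun t => i ∈ Finset.Ico (q * (t / q)) t)
          ⊆ Finset.Ico (i + 1) (i + q) := by
        intro t ht
        simp only [Finset.mem_filter, Finset.mem_range, Finset.mem_Ico] at ht ⊢
        obtain ⟨_, hqle, hit⟩ := ht
        have h5 : t < q * (t / q) + q := by
          conv_lhs => rw [← Nat.div_add_mod t q]
          exact Nat.add_lt_add_left (Nat.mod_lt t (by omega)) _
        exact ⟨by omega, lt_of_lt_of_le h5 (Nat.add_le_add_right hqle q)⟩
      calc ((Finset.range T).filter _).card
          ≤ (Finset.Ico (i + 1) (i + q)).card := Finset.card_le_card hsubset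
        _ = q - 1 := by rw [Nat.card_Ico]; omega
        _ ≤ q := by omega
    exact mul_le_mul_of_nonneg_right (by exact_mod_cast hcard) (hz i)
  calc (∑ i ∈ Finset.range T, ∑ t ∈ Finset.range T,
        if i ∈ Finset.Ico (q * (t / q)) t then z i else 0)
      ≤ ∑ i ∈ Finset.range T, (q : ℝ) * z i := Finset.sum_le_sum hbound
    _ = (q : ℝ) * ∑ i ∈ Finset.range T, z i := by rw [Finset.mul_sum]

/-- Pointwise descent inequality for one step. -/
lemma descent_pointwise {η L_R L_h M₂ : ℝ} (hη0 : 0 < η) (hη1 : η ≤ 1) (hLh : 0 < L_h)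
    {h f : Mat d r → ℝ} (hconv : ConvexOn ℝ Set.univ h)
    (hlip : ∀ A B : Mat d r, |h A - h B| ≤ L_h * ‖A - B‖)
    {Xt Xt1 vt ζt Gft : Mat d r}
    (hζmin : IsSubMin (2/5) h Xt vt ζt)
    (hfdesc : f Xt1 ≤ f Xt + η * finner Gft ζt + (L_R * η ^ 2 / 2) * ‖ζt‖ ^ 2)
    (hretr2 : ‖Xt1 - (Xt + η • ζt)‖ ≤ M₂ * η ^ 2 * ‖ζt‖ ^ 2) :
    f Xt1 + h Xt1 ≤ (f Xt + h Xt)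
      + ((η/5) * ‖vt - Gft‖ ^ 2 - (5*η/4 - (L_R/2 + L_h*M₂)*η^2) * ‖ζt‖ ^ 2) := by
  have hγ0 : (0:ℝ) < 2/5 := by norm_num
  have hB1 := submin_at_zero hγ0 hconv hζmin
  have hB1' : finner vt ζt + (5/2) * ‖ζt‖ ^ 2 + h (Xt + ζt) ≤ h Xt := by
    have h5 : (1/(2/5 : ℝ)) = 5/2 := by norm_num
    rw [h5] at hB1
    linarith
  have s1 : η * (finner vt ζt + (5/2) * ‖ζt‖ ^ 2 + h (Xt + ζt)) ≤ η * h Xt :=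
    mul_le_mul_of_nonneg_left hB1' hη0.le
  have hip : finner Gft ζt = finner vt ζt + finner (Gft - vt) ζt := by
    rw [finner_sub_left]
    ring
  have hCS : finner (Gft - vt) ζt ≤ ‖Gft - vt‖ * ‖ζt‖ := finner_le_norm _ _
  have hAM : ‖Gft - vt‖ * ‖ζt‖ ≤ (1/5) * ‖Gft - vt‖ ^ 2 + (5/4) * ‖ζt‖ ^ 2 := by
    nlinarith [sq_nonneg ((2/5) * ‖Gft - vt‖ - ‖ζt‖)]
  have s2 : η * finner (Gft - vt) ζt
      ≤ η * ((1/5) * ‖Gft - vt‖ ^ 2 + (5/4) * ‖ζt‖ ^ 2) :=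
    mul_le_mul_of_nonneg_left (hCS.trans hAM) hη0.le
  have hhlip : h Xt1 ≤ h (Xt + η • ζt) + L_h * (M₂ * η^2 * ‖ζt‖^2) := by
    have h1 := hlip Xt1 (Xt + η • ζt)
    have h2 := le_abs_self (h Xt1 - h (Xt + η • ζt))
    have h3 := mul_le_mul_of_nonneg_left hretr2 hLh.le
    linarith
  have hhconv : h (Xt + η • ζt) ≤ (1 - η) * h Xt + η * h (Xt + ζt) := by
    have heq : Xt + η • ζt = (1 - η) • Xt + η • (Xt + ζt) := by module
    rw [heq]
    exact hconv.2 (Set.mem_univ _) (Set.mem_univ _) (by linarith) hη0.le (by ring)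
  have hnrev : ‖vt - Gft‖ = ‖Gft - vt‖ := norm_sub_rev _ _
  rw [hnrev]
  nlinarith [s1, s2, hfdesc, hhlip, hhconv, hip]

/-- Pointwise bound on the gradient mapping. -/
lemma gradmap_pointwise {M₁ : ℝ} (hM₁ : 0 < M₁)
    {h : Mat d r → ℝ} (hconv : ConvexOn ℝ Set.univ h)
    {Xt vt ζt ξt Gmt Gft : Mat d r}
    (hζmin : IsSubMin (2/5) h Xt vt ζt) (hξmin : IsSubMin (2/5) h Xt Gft ξt)
    (hretr1 : ∀ χ ∈ TangentAt Xt, ‖polarRetr Xt χ - Xt‖ ≤ M₁ * ‖χ‖)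
    (hGm : Gmt = (1/(2/5 : ℝ)) • (Xt - polarRetr Xt ((2/5 : ℝ) • ξt))) :
    ‖Gmt‖ ^ 2 ≤ 2*M₁^2 * ‖ζt‖ ^ 2 + 2*M₁^2*(2/5)^2 * ‖vt - Gft‖ ^ 2 := by
  have hγ0 : (0:ℝ) < 2/5 := by norm_num
  have hd := submin_dist hγ0 hconv hζmin hξmin
  have hGn : ‖Gmt‖ ≤ M₁ * ‖ξt‖ := by
    rw [hGm, norm_smul, Real.norm_eq_abs]
    have h2 := hretr1 ((2/5 : ℝ) • ξt) (tangent_smul _ hξmin.1)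
    rw [norm_smul, Real.norm_eq_abs] at h2
    rw [norm_sub_rev] at h2
    have habs1 : |(1/(2/5) : ℝ)| = 5/2 := by norm_num
    have habs2 : |(2/5 : ℝ)| = 2/5 := by norm_num
    rw [habs1]
    rw [habs2] at h2
    linarith
  have htri : ‖ξt‖ ≤ ‖ζt‖ + (2/5) * ‖vt - Gft‖ := by
    have h1 : ‖ξt‖ ≤ ‖ζt‖ + ‖ξt - ζt‖ := by
      calc ‖ξt‖ = ‖ζt + (ξt - ζt)‖ := by rw [add_sub_cancel]
        _ ≤ ‖ζt‖ + ‖ξt - ζt‖ := norm_add_le _ _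
    have h2 : ‖Gft - vt‖ = ‖vt - Gft‖ := norm_sub_rev _ _
    rw [h2] at hd
    linarith
  nlinarith [hGn, htri, norm_nonneg Gmt, norm_nonneg ξt, norm_nonneg ζt,
    norm_nonneg (vt - Gft), hM₁.le,
    sq_nonneg (‖ζt‖ - (2/5) * ‖vt - Gft‖),
    mul_le_mul hGn hGn (norm_nonneg _) (mul_nonneg hM₁.le (norm_nonneg _)),
    mul_le_mul htri htri (norm_nonneg _) (by positivity)]

end Aux

set_option maxHeartbeats 1000000 in
/-- Theorem 2(i), finite-sum R-ProxSPB: with `γ = 2/5` and the epoch-wise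
R-SARAH variance bound, `(1/T)∑_{t<T} E[‖G_t‖²] ≤ 14M₁²Δ₀/(ηT) + 8M₁²γΛη·Δ₀/T`. -/
theorem RProxSPB_finite_sum_convergence {d r : ℕ}
    {Ω : Type*} [MeasurableSpace Ω] (P : Measure Ω) [IsProbabilityMeasure P]
    (T q : ℕ) (hT : 1 ≤ T) (hq : 1 ≤ q)
    (γ η L_R L_h M₁ M₂ Λ Fstar Δ₀ : ℝ)
    (hγ : γ = 2 / 5)
    (hη0 : 0 < η) (hη1 : η ≤ 1)
    (hLR : 0 < L_R) (hLh : 0 < L_h) (hM₁ : 0 < M₁) (hM₂ : 0 < M₂) (hΛ : 0 ≤ Λ)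
    (hηc : Λ * η ^ 2 / 2 + (L_R / 2 + L_h * M₂) * η - 2 ≤ -1)
    (f h : Mat d r → ℝ)
    (hconv : ConvexOn ℝ Set.univ h)
    (hlip : ∀ A B : Mat d r, |h A - h B| ≤ L_h * ‖A - B‖)
    (hdiff : Differentiable ℝ f)
    (Gf : Mat d r → Mat d r)
    (hgrad : ∀ Y u : Mat d r, (fderiv ℝ f Y) u = finner (Gf Y) u)
    (hFlb : ∀ Y : Mat d r, Stiefel Y → Fstar ≤ f Y + h Y)
    (X0 : Mat d r) (hX0S : Stiefel X0)
    (hΔ₀ : Δ₀ = (f X0 + h X0) - Fstar)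
    (X v ζ ξ : ℕ → Ω → Mat d r)
    (hX0 : ∀ ω, X 0 ω = X0)
    (has : ∀ᵐ ω ∂P, ∀ t < T,
      Stiefel (X t ω) ∧
      IsSubMin γ h (X t ω) (v t ω) (ζ t ω) ∧
      X (t + 1) ω = polarRetr (X t ω) (η • ζ t ω) ∧
      f (X (t + 1) ω) ≤
        f (X t ω) + η * finner (Gf (X t ω)) (ζ t ω) + (L_R * η ^ 2 / 2) * ‖ζ t ω‖ ^ 2 ∧
      ‖X (t + 1) ω - (X t ω + η • ζ t ω)‖ ≤ M₂ * η ^ 2 * ‖ζ t ω‖ ^ 2 ∧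
      (∀ χ ∈ TangentAt (X t ω), ‖polarRetr (X t ω) χ - X t ω‖ ≤ M₁ * ‖χ‖) ∧
      IsSubMin γ h (X t ω) (Gf (X t ω)) (ξ t ω))
    (G : ℕ → Ω → Mat d r)
    (hG : ∀ t ω, G t ω = (1 / γ) • (X t ω - polarRetr (X t ω) (γ • ξ t ω)))
    (hintF : ∀ t ≤ T, Integrable (fun ω => f (X t ω) + h (X t ω)) P)
    (hintζ : ∀ t < T, Integrable (fun ω => ‖ζ t ω‖ ^ 2) P)
    (hintv : ∀ t < T, Integrable (fun ω => ‖v t ω - Gf (X t ω)‖ ^ 2) P)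
    (hintG : ∀ t < T, Integrable (fun ω => ‖G t ω‖ ^ 2) P)
    (hvar : ∀ t < T, ∫ ω, ‖v t ω - Gf (X t ω)‖ ^ 2 ∂P ≤
      (Λ * η ^ 2 / q) * ∑ i ∈ Finset.Ico (q * (t / q)) t, ∫ ω, ‖ζ i ω‖ ^ 2 ∂P) :
    (1 / (T : ℝ)) * ∑ t ∈ Finset.range T, ∫ ω, ‖G t ω‖ ^ 2 ∂P ≤
      14 * M₁ ^ 2 * Δ₀ / (η * T) + 8 * M₁ ^ 2 * γ * Λ * η * Δ₀ / T := by
  subst hγ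
  have hγ0 : (0:ℝ) < 2/5 := by norm_num
  have hT0 : (0:ℝ) < T := by exact_mod_cast Nat.lt_of_lt_of_le Nat.zero_lt_one hT
  have hΔ0 : 0 ≤ Δ₀ := by
    rw [hΔ₀]
    linarith [hFlb X0 hX0S]
  -- opaque abbreviations for the expectations
  obtain ⟨zI, hzI⟩ : ∃ gg : ℕ → ℝ, ∀ t, gg t = ∫ ω, ‖ζ t ω‖ ^ 2 ∂P := ⟨_, fun _ => rfl⟩
  obtain ⟨eI, heI⟩ : ∃ gg : ℕ → ℝ, ∀ t, gg t = ∫ ω, ‖v t ω - Gf (X t ω)‖ ^ 2 ∂P :=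
    ⟨_, fun _ => rfl⟩
  obtain ⟨gI, hgI⟩ : ∃ gg : ℕ → ℝ, ∀ t, gg t = ∫ ω, ‖G t ω‖ ^ 2 ∂P := ⟨_, fun _ => rfl⟩
  obtain ⟨Ef, hEf⟩ : ∃ gg : ℕ → ℝ, ∀ t, gg t = ∫ ω, (f (X t ω) + h (X t ω)) ∂P :=
    ⟨_, fun _ => rfl⟩
  have hzpos : ∀ i, 0 ≤ zI i := fun i => by
    rw [hzI]
    exact integral_nonneg (fun ω => by positivity)
  have hepos : ∀ i, 0 ≤ eI i := fun i => by
    rw [heI]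
    exact integral_nonneg (fun ω => by positivity)
  -- Step 2: integrated descent
  have hstep : ∀ t, t < T → Ef (t+1) ≤ Ef t
      + ((η/5) * eI t - (5*η/4 - (L_R/2 + L_h*M₂)*η^2) * zI t) := by
    intro t ht
    have hdesc : ∀ᵐ ω ∂P,
        f (X (t+1) ω) + h (X (t+1) ω) ≤ (f (X t ω) + h (X t ω))
          + ((η/5) * ‖v t ω - Gf (X t ω)‖ ^ 2
            - (5*η/4 - (L_R/2 + L_h*M₂)*η^2) * ‖ζ t ω‖ ^ 2) := by
      filter_upwards [has] with ω hω
      obtain ⟨hSt, hζmin, hXrec, hfdesc, hretr2, hretr1, hξmin⟩ := hω t ht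
      exact descent_pointwise hη0 hη1 hLh hconv hlip hζmin hfdesc hretr2
    have hint1 : Integrable (fun ω => f (X (t+1) ω) + h (X (t+1) ω)) P := hintF (t+1) (by omega)
    have hia : Integrable (fun ω => (η/5) * ‖v t ω - Gf (X t ω)‖ ^ 2) P :=
      (hintv t ht).const_mul _
    have hib : Integrable (fun ω =>
        (5*η/4 - (L_R/2 + L_h*M₂)*η^2) * ‖ζ t ω‖ ^ 2) P :=
      (hintζ t ht).const_mul _
    have hic : Integrable (fun ω => (η/5) * ‖v t ω - Gf (X t ω)‖ ^ 2
        - (5*η/4 - (L_R/2 + L_h*M₂)*η^2) * ‖ζ t ω‖ ^ 2) P := hia.sub hib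
    have hint2 : Integrable (fun ω => (f (X t ω) + h (X t ω))
        + ((η/5) * ‖v t ω - Gf (X t ω)‖ ^ 2
          - (5*η/4 - (L_R/2 + L_h*M₂)*η^2) * ‖ζ t ω‖ ^ 2)) P :=
      (hintF t ht.le).add hic
    have hmono := integral_mono_ae hint1 hint2 hdesc
    rw [hEf (t+1), hEf t, heI t, hzI t]
    refine hmono.trans_eq ?_
    rw [integral_add (hintF t ht.le) hic, integral_sub hia hib,
      integral_const_mul, integral_const_mul]
  -- Step 3: telescope
  have htel : ∀ n, n ≤ T →
      Ef n + ∑ t ∈ Finset.range n,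
        ((5*η/4 - (L_R/2 + L_h*M₂)*η^2) * zI t - (η/5) * eI t) ≤ Ef 0 := by
    intro n hn
    induction n with
    | zero => simp
    | succ m ih =>
      have h1 := hstep m (by omega)
      have h2 := ih (by omega)
      rw [Finset.sum_range_succ]
      linarith
  -- Step 4: bounds on Ef T and Ef 0
  have hET : Fstar ≤ Ef T := by
    have hae : ∀ᵐ ω ∂P, Fstar ≤ f (X T ω) + h (X T ω) := by
      filter_upwards [has] with ω hω
      obtain ⟨hSt, hζmin, hXrec, _, _, _, _⟩ := hω (T-1) (by omega)
      have hTT : T - 1 + 1 = T := by omega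
      have hst : Stiefel (X T ω) := by
        rw [← hTT, hXrec]
        exact stiefel_polarRetr hSt (tangent_smul η hζmin.1)
      exact hFlb _ hst
    have hmono := integral_mono_ae (integrable_const Fstar) (hintF T le_rfl) hae
    rw [hEf T]
    simpa using hmono
  have hE0 : Ef 0 = f X0 + h X0 := by
    rw [hEf 0]
    rw [show (fun ω => f (X 0 ω) + h (X 0 ω)) = fun _ : Ω => f X0 + h X0 from
      funext fun ω => by rw [hX0 ω]]
    simp
  -- Step 5: variance sum bound
  have hvar' : ∀ t < T, eI t ≤ (Λ * η^2 / q) * ∑ i ∈ Finset.Ico (q * (t/q)) t, zI i := by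
    intro t ht
    rw [heI t]
    have := hvar t ht
    have hsum : ∑ i ∈ Finset.Ico (q * (t/q)) t, zI i
        = ∑ i ∈ Finset.Ico (q * (t/q)) t, ∫ ω, ‖ζ i ω‖ ^ 2 ∂P :=
      Finset.sum_congr rfl fun i _ => hzI i
    rw [hsum]
    exact this
  have hesum : ∑ t ∈ Finset.range T, eI t ≤ Λ * η^2 * ∑ t ∈ Finset.range T, zI t := by
    have hqR : (0:ℝ) < q := by exact_mod_cast hq
    calc ∑ t ∈ Finset.range T, eI t
        ≤ ∑ t ∈ Finset.range T, (Λ * η^2 / q) * ∑ i ∈ Finset.Ico (q * (t/q)) t, zI i :=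
          Finset.sum_le_sum fun t ht => hvar' t (Finset.mem_range.mp ht)
      _ = (Λ * η^2 / q) * ∑ t ∈ Finset.range T, ∑ i ∈ Finset.Ico (q * (t/q)) t, zI i := by
          rw [Finset.mul_sum]
      _ ≤ (Λ * η^2 / q) * ((q:ℝ) * ∑ i ∈ Finset.range T, zI i) := by
          apply mul_le_mul_of_nonneg_left (sum_epoch_le q T hq zI hzpos)
          positivity
      _ = Λ * η^2 * ∑ t ∈ Finset.range T, zI t := by
          field_simp
  -- Step 6: bound on ∑ zI
  have hkey := htel T le_rfl
  rw [Finset.sum_sub_distrib, ← Finset.mul_sum, ← Finset.mul_sum] at hkey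
  have hSz0 : 0 ≤ ∑ t ∈ Finset.range T, zI t := Finset.sum_nonneg fun i _ => hzpos i
  have hΔb : (5*η/4 - (L_R/2 + L_h*M₂)*η^2) * ∑ t ∈ Finset.range T, zI t
      - (η/5) * ∑ t ∈ Finset.range T, eI t ≤ Δ₀ := by
    rw [hΔ₀]
    linarith [hET, hkey, hE0.le, hE0.ge]
  have hSeb : (η/5) * ∑ t ∈ Finset.range T, eI t
      ≤ (η/5) * (Λ * η^2 * ∑ t ∈ Finset.range T, zI t) :=
    mul_le_mul_of_nonneg_left hesum (by positivity)
  have hcoef : η/4 ≤ (5*η/4 - (L_R/2 + L_h*M₂)*η^2) - (η/5) * (Λ * η^2) := by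
    have h1 : Λ * η^2 / 2 + (L_R/2 + L_h*M₂) * η ≤ 1 := by linarith
    have h2 : (Λ * η^2 / 2 + (L_R/2 + L_h*M₂) * η) * η ≤ 1 * η :=
      mul_le_mul_of_nonneg_right h1 hη0.le
    have h3 : 0 ≤ Λ * η^3 := by positivity
    nlinarith
  have hzb : (η/4) * ∑ t ∈ Finset.range T, zI t ≤ Δ₀ := by
    have hmul := mul_le_mul_of_nonneg_right hcoef hSz0
    nlinarith [hΔb, hSeb]
  -- Step 7: integrated bound on the gradient mapping
  have hGstep : ∀ t, t < T → gI t ≤ 2*M₁^2 * zI t + 2*M₁^2*(2/5)^2 * eI t := by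
    intro t ht
    have hae : ∀ᵐ ω ∂P, ‖G t ω‖ ^ 2
        ≤ 2*M₁^2 * ‖ζ t ω‖ ^ 2 + 2*M₁^2*(2/5)^2 * ‖v t ω - Gf (X t ω)‖ ^ 2 := by
      filter_upwards [has] with ω hω
      obtain ⟨hSt, hζmin, _, _, _, hretr1, hξmin⟩ := hω t ht
      exact gradmap_pointwise hM₁ hconv hζmin hξmin hretr1 (hG t ω)
    have hia : Integrable (fun ω => 2*M₁^2 * ‖ζ t ω‖ ^ 2) P := (hintζ t ht).const_mul _
    have hib : Integrable (fun ω => 2*M₁^2*(2/5)^2 * ‖v t ω - Gf (X t ω)‖ ^ 2) P :=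
      (hintv t ht).const_mul _
    have hiab : Integrable (fun ω => 2*M₁^2 * ‖ζ t ω‖ ^ 2
        + 2*M₁^2*(2/5)^2 * ‖v t ω - Gf (X t ω)‖ ^ 2) P := hia.add hib
    have hmono := integral_mono_ae (hintG t ht) hiab hae
    rw [hgI t, hzI t, heI t]
    refine hmono.trans_eq ?_
    have heq : (∫ ω, (2*M₁^2 * ‖ζ t ω‖ ^ 2
          + 2*M₁^2*(2/5)^2 * ‖v t ω - Gf (X t ω)‖ ^ 2) ∂P)
        = (∫ ω, 2*M₁^2 * ‖ζ t ω‖ ^ 2 ∂P)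
          + ∫ ω, 2*M₁^2*(2/5)^2 * ‖v t ω - Gf (X t ω)‖ ^ 2 ∂P := integral_add hia hib
    rw [heq, integral_const_mul, integral_const_mul]
  -- Step 8: sum the gradient bounds
  have hSg : ∑ t ∈ Finset.range T, gI t
      ≤ 2*M₁^2 * ∑ t ∈ Finset.range T, zI t + 2*M₁^2*(2/5)^2 * ∑ t ∈ Finset.range T, eI t := by
    rw [Finset.mul_sum, Finset.mul_sum, ← Finset.sum_add_distrib]
    exact Finset.sum_le_sum fun t ht => hGstep t (Finset.mem_range.mp ht)
  have hSe0 : 0 ≤ ∑ t ∈ Finset.range T, eI t := Finset.sum_nonneg fun i _ => hepos i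
  have hSzb : ∑ t ∈ Finset.range T, zI t ≤ 4 * Δ₀ / η := by
    rw [le_div_iff₀ hη0]
    nlinarith [hzb]
  -- final assembly
  have hfin : ∑ t ∈ Finset.range T, gI t
      ≤ 14 * M₁^2 * (Δ₀ / η) + 8 * M₁^2 * (2/5) * Λ * η * Δ₀ := by
    have h1 : ∑ t ∈ Finset.range T, gI t
        ≤ (2*M₁^2 + 2*M₁^2*(2/5)^2*(Λ*η^2)) * ∑ t ∈ Finset.range T, zI t := by
      have hscale := mul_le_mul_of_nonneg_left hesum
        (by positivity : (0:ℝ) ≤ 2*M₁^2*(2/5)^2)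
      linarith [hSg, hscale]
    have h2 : (2*M₁^2 + 2*M₁^2*(2/5)^2*(Λ*η^2)) * ∑ t ∈ Finset.range T, zI t
        ≤ (2*M₁^2 + 2*M₁^2*(2/5)^2*(Λ*η^2)) * (4 * Δ₀ / η) := by
      apply mul_le_mul_of_nonneg_left hSzb
      positivity
    have h3 : (2*M₁^2 + 2*M₁^2*(2/5)^2*(Λ*η^2)) * (4 * Δ₀ / η)
        = 8*M₁^2*(Δ₀/η) + (32/25)*M₁^2*Λ*η*Δ₀ := by
      field_simp
      ring
    have h4 : (0:ℝ) ≤ M₁^2*(Δ₀/η) := by positivity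
    have h5 : (0:ℝ) ≤ M₁^2*Λ*η*Δ₀ := by positivity
    have h6 : ∑ t ∈ Finset.range T, gI t ≤ 8*M₁^2*(Δ₀/η) + (32/25)*M₁^2*Λ*η*Δ₀ :=
      h1.trans (h2.trans_eq h3)
    linarith [h6, h4, h5]
  have hgoal : ∑ t ∈ Finset.range T, ∫ ω, ‖G t ω‖ ^ 2 ∂P = ∑ t ∈ Finset.range T, gI t :=
    Finset.sum_congr rfl fun t _ => (hgI t).symm
  rw [hgoal]
  calc (1 / (T : ℝ)) * ∑ t ∈ Finset.range T, gI t
      ≤ (1 / (T : ℝ)) * (14 * M₁^2 * (Δ₀ / η) + 8 * M₁^2 * (2/5) * Λ * η * Δ₀) :=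
        mul_le_mul_of_nonneg_left hfin (by positivity)
    _ = 14 * M₁ ^ 2 * Δ₀ / (η * T) + 8 * M₁ ^ 2 * (2/5) * Λ * η * Δ₀ / T := by
        field_simp
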